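/- Let G be a finite group of order 2pq (p < q distinct odd primes) acting faithfully on a finite set S, and suppose the minimal base size of this action is 3. Then every orbit of G on S has size at most q. -/

import Mathlib

/-- A base for the action of `G` on `S`: a set whose pointwise stabilizer is trivial. -/
def IsBase (G : Type*) {S : Type*} [Group G] [MulAction G S] (B : Set S) : Prop :=
  ∀ g : G, (∀ x ∈ B, g • x = x) → g = 1

/-- The base size: minimal cardinality of a base. -/
noncomputable def baseSize (G S : Type*) [Group G] [MulAction G S] : ℕ :=
  sInf {n | ∃ B : Finset S, IsBase G (B : Set S) ∧ B.card = n}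

/-!
If some orbit `G • v` had more than `q` points, then `|G_v| = 2pq / |G • v| < 2p`, and the only
divisors of `2pq` below `2p` are `1, 2, p, q`. If `G_v = 1` then `{v}` is a base. Otherwise `G_v`
has prime order; by faithfulness some `h ∈ G_v` moves a point `w`, and `G_v ∩ G_w` is a proper
subgroup of the prime-order group `G_v`, hence trivial, so `{v, w}` is a base. Either way the
base size is at most `2`.
-/

theorem Nat.eq_one_or_prime_of_dvd_two_mul_mul_of_lt {p q s : ℕ} (hp : p.Prime) (hq : q.Prime)
    (hpq : p < q) (hs : s ∣ 2 * p * q) (hs_lt : s < 2 * p) : s = 1 ∨ s.Prime := by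
  rw [mul_assoc] at hs
  obtain ⟨a, b, ha, hb, rfl⟩ := exists_dvd_and_dvd_of_dvd_mul hs
  obtain ⟨c, d, hc, hd, rfl⟩ := exists_dvd_and_dvd_of_dvd_mul hb
  have := hq.two_le
  rcases Nat.prime_two.eq_one_or_self_of_dvd a ha with rfl | rfl <;>
    rcases hp.eq_one_or_self_of_dvd c hc with rfl | rfl <;>
      rcases hq.eq_one_or_self_of_dvd d hd with rfl | rfl <;>
        first | (norm_num [hp, hq]; done) | (exfalso; nlinarith)

theorem Subgroup.le_of_prime_card_of_inf_ne_bot {G : Type*} [Group G] {H K : Subgroup G}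
    (hH : (Nat.card H).Prime) (hHK : H ⊓ K ≠ ⊥) : H ≤ K := by
  have : Finite H := Nat.finite_of_card_ne_zero hH.ne_zero
  rcases (Nat.dvd_prime hH).mp (card_dvd_of_le (inf_le_left : H ⊓ K ≤ H)) with h | h
  · exact absurd (eq_bot_of_card_eq _ h) hHK
  · exact inf_eq_left.mp (eq_of_le_of_card_ge inf_le_left h.ge)

section Base

variable {G S : Type*} [Group G] [MulAction G S]

theorem baseSize_le_card {B : Finset S} (hB : IsBase G (B : Set S)) : baseSize G S ≤ B.card :=
  Nat.sInf_le ⟨B, hB, rfl⟩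

theorem isBase_singleton_of_stabilizer_eq_bot {v : S} (hv : MulAction.stabilizer G v = ⊥) :
    IsBase G ({v} : Set S) := fun _ hg =>
  (Subgroup.mem_bot (G := G)).mp (hv ▸ hg v rfl)

theorem exists_isBase_pair_of_prime_card_stabilizer [FaithfulSMul G S] {v : S}
    (hv : (Nat.card (MulAction.stabilizer G v)).Prime) : ∃ w, IsBase G ({v, w} : Set S) := by
  obtain ⟨h, hh, hh1⟩ := ((MulAction.stabilizer G v).bot_or_exists_ne_one).resolve_left
    fun hbot => by simp [hbot, Nat.not_prime_one] at hv
  obtain ⟨w, hw⟩ : ∃ w : S, h • w ≠ w := by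
    by_contra! hfix
    exact hh1 (eq_of_smul_eq_smul fun x => by rw [one_smul, hfix])
  refine ⟨w, fun g hg => ?_⟩
  by_contra hg1
  have hmeet : MulAction.stabilizer G v ⊓ MulAction.stabilizer G w ≠ ⊥ :=
    Subgroup.ne_bot_iff_exists_ne_one.mpr
      ⟨⟨g, hg v (by simp), hg w (by simp)⟩, fun h => hg1 (congrArg Subtype.val h)⟩
  exact hw (Subgroup.le_of_prime_card_of_inf_ne_bot hv hmeet hh)

end Base

theorem stmt16_general (G S : Type*) [Group G] [MulAction G S]
    [FaithfulSMul G S] (p q : ℕ) (hp : p.Prime) (hq : q.Prime)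
    (hlt : p < q)
    (hcard : Nat.card G = 2 * p * q) (hbase : baseSize G S = 3) :
    ∀ v : S, Nat.card (MulAction.orbit G v) ≤ q := by
  classical
  intro v
  by_contra! hgt
  have horbit :
      Nat.card (MulAction.stabilizer G v) * Nat.card (MulAction.orbit G v) = 2 * p * q := by
    rw [Nat.card_coe_set_eq, ← MulAction.index_stabilizer, Subgroup.card_mul_index, hcard]
  have hstab : Nat.card (MulAction.stabilizer G v) < 2 * p := by
    by_contra! h
    have := Nat.mul_lt_mul_of_le_of_lt h hgt (by linarith [hp.two_le])
    linarith
  have hle_two : baseSize G S ≤ 2 := by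
    rcases Nat.eq_one_or_prime_of_dvd_two_mul_mul_of_lt hp hq hlt (Dvd.intro _ horbit) hstab
      with htriv | hprime
    · have hsingleton := isBase_singleton_of_stabilizer_eq_bot (Subgroup.eq_bot_of_card_eq _ htriv)
      exact (baseSize_le_card (B := {v}) (by simpa using hsingleton)).trans (by simp)
    · obtain ⟨w, hw⟩ := exists_isBase_pair_of_prime_card_stabilizer hprime
      exact (baseSize_le_card (B := {v, w}) (by simpa using hw)).trans Finset.card_le_two
  omega

/-- Let `G` be a finite group of order `2pq` (`p < q` distinct odd primes) acting
faithfully on a finite set `S`, with minimal base size `3`.  Then every orbit of `G` on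
`S` has size at most `q`. -/
theorem stmt16 (G S : Type*) [Group G] [Fintype G] [Fintype S] [MulAction G S]
    [FaithfulSMul G S] (p q : ℕ) (hp : p.Prime) (hq : q.Prime)
    (hop : Odd p) (hoq : Odd q) (hlt : p < q)
    (hcard : Nat.card G = 2 * p * q) (hbase : baseSize G S = 3) :
    ∀ v : S, Nat.card (MulAction.orbit G v) ≤ q :=
  stmt16_general G S p q hp hq hlt hcard hbase
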